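/- arXiv:1411.3097 — 2 statements merged into one kernel-verified Lean document; each statement's English description precedes it below -/
import Mathlib

section
/- Let I ⊆ ℝ be nonempty and open. Suppose there exist positive reals x₁, x₂, b, K, ε and a function g : cl(B(x₂,b)) × I → ℝ such that: (i) g is continuous; (ii) g is uniformly Lipschitz with constant K/b in its first argument; (iii) ε ≤ g(x,y) ≤ K for all (x,y) and x₂ − x₁ ∈ (0, (b/K)ε). Then for every ψ ∈ C¹([−b/K, 0], I) there exists a unique y ∈ C¹([0, b/K], ℝ) with y(s) ∈ cl(B(x₂,b)) for all s, satisfying y(0) = x₂ and y'(s) = −g(y(s), ψ(−s)) for s ∈ (0, b/K); moreover there exists a unique τ ∈ (0, b/K) with y(τ) = x₁. -/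
/-! With `T = b / K`, the field `(t, x) ↦ -g (x, ψ (-t))` is bounded by `K` and `(K / b)`-Lipschitz
on the closed ball of radius `b = K * T` about `x₂`, so Picard–Lindelöf gives a solution on `[0, T]`
that never leaves the ball, and Grönwall makes it unique. Since `y' ≤ -ε`, the solution is strictly
decreasing with `y T ≤ x₂ - ε * T < x₁ < x₂ = y 0`, so it crosses `x₁` exactly once. -/

open Set

noncomputable def supN {X : Type*} [NormedAddCommGroup X] (a b : ℝ) (f : ℝ → X) : ℝ :=
  ⨆ t : Set.Icc a b, ‖f t.1‖

def C1on {X : Type*} [NormedAddCommGroup X] [NormedSpace ℝ X] (a b : ℝ) (f : ℝ → X) : Prop :=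
  ContinuousOn f (Set.Icc a b) ∧ (∀ t ∈ Set.Icc a b, DifferentiableWithinAt ℝ f (Set.Icc a b) t) ∧
    ContinuousOn (derivWithin f (Set.Icc a b)) (Set.Icc a b)

noncomputable def nC1 {X : Type*} [NormedAddCommGroup X] [NormedSpace ℝ X] (a b : ℝ) (f : ℝ → X) : ℝ :=
  supN a b f + supN a b (derivWithin f (Set.Icc a b))

open Metric
open scoped NNReal

theorem IsPicardLindelof.exists_eq_forall_mem_Icc_hasDerivWithinAt_mem_closedBall
    {E : Type*} [NormedAddCommGroup E] [NormedSpace ℝ E] [CompleteSpace E]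
    {f : ℝ → E → E} {tmin tmax : ℝ} {t₀ : Icc tmin tmax} {x₀ x : E} {a r L K : ℝ≥0}
    (hf : IsPicardLindelof f t₀ x₀ a r L K) (hx : x ∈ closedBall x₀ r) :
    ∃ α : ℝ → E, α t₀ = x ∧ ∀ t ∈ Icc tmin tmax,
      HasDerivWithinAt α (f t (α t)) (Icc tmin tmax) t ∧ α t ∈ closedBall x₀ a := by
  obtain ⟨α, hα⟩ := ODE.FunSpace.exists_isFixedPt_next hf hx
  have hmem (t : ℝ) : α.compProj t ∈ closedBall x₀ a := α.compProj_mem_closedBall hf.mul_max_le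
  refine ⟨α.compProj, ?_, fun t ht ↦ ⟨?_, hmem t⟩⟩
  · rw [ODE.FunSpace.compProj_val, ← hα, ODE.FunSpace.next_apply₀]
  · refine ODE.hasDerivWithinAt_picard_Icc t₀.2 hf.continuousOn_uncurry
      α.continuous_compProj.continuousOn (fun t _ ↦ hmem t) x ht
      |>.congr_of_mem (fun t' ht' ↦ ?_) ht
    nth_rw 1 [← hα]
    rw [ODE.FunSpace.compProj_of_mem ht', ODE.FunSpace.next_apply]

theorem IsPicardLindelof.of_forcing {E P : Type*} [NormedAddCommGroup E] [TopologicalSpace P]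
    {g : E → P → E} {φ : ℝ → P} {I : Set P} {x₀ : E} {a L M : ℝ≥0} {T : ℝ} (hT : 0 ≤ T)
    (hgc : ContinuousOn (fun p : E × P => g p.1 p.2) (closedBall x₀ a ×ˢ I))
    (hgl : ∀ y ∈ I, LipschitzOnWith L (g · y) (closedBall x₀ a))
    (hgb : ∀ u ∈ closedBall x₀ a, ∀ y ∈ I, ‖g u y‖ ≤ M)
    (hφ : ContinuousOn φ (Icc 0 T)) (hφI : MapsTo φ (Icc 0 T) I) (hMT : M * T ≤ a) :
    IsPicardLindelof (fun t x => g x (φ t)) (⟨0, left_mem_Icc.2 hT⟩ : Icc 0 T) x₀ a 0 M L where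
  lipschitzOnWith t ht := hgl (φ t) (hφI ht)
  continuousOn x hx :=
    hgc.comp (continuousOn_const.prodMk hφ) fun t ht ↦ ⟨hx, hφI ht⟩
  norm_le t ht x hx := hgb x hx (φ t) (hφI ht)
  mul_max_le := by simpa [hT] using hMT

theorem ODE_solution_unique_of_mem_Icc_hasDerivWithinAt {E : Type*} [NormedAddCommGroup E]
    [NormedSpace ℝ E] {v : ℝ → E → E} {s : Set E} {K : ℝ≥0} {f g : ℝ → E} {a b : ℝ}
    (hv : ∀ t ∈ Ico a b, LipschitzOnWith K (v t) s)
    (hf : ∀ t ∈ Icc a b, HasDerivWithinAt f (v t (f t)) (Icc a b) t ∧ f t ∈ s)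
    (hg : ∀ t ∈ Icc a b, HasDerivWithinAt g (v t (g t)) (Icc a b) t ∧ g t ∈ s)
    (ha : f a = g a) : EqOn f g (Icc a b) := by
  have hIci {h : ℝ → E} {h' : E} {t : ℝ} (ht : t ∈ Ico a b)
      (hh : HasDerivWithinAt h h' (Icc a b) t) : HasDerivWithinAt h h' (Ici t) t :=
    hh.mono_of_mem_nhdsWithin (Icc_mem_nhdsGE_of_mem ht)
  exact ODE_solution_unique_of_mem_Icc_right hv
    (fun t ht ↦ (hf t ht).1.continuousWithinAt)
    (fun t ht ↦ hIci ht (hf t (Ico_subset_Icc_self ht)).1)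
    (fun t ht ↦ (hf t (Ico_subset_Icc_self ht)).2)
    (fun t ht ↦ (hg t ht).1.continuousWithinAt)
    (fun t ht ↦ hIci ht (hg t (Ico_subset_Icc_self ht)).1)
    (fun t ht ↦ (hg t (Ico_subset_Icc_self ht)).2) ha

theorem existsUnique_mem_Ioo_eq_of_hasDerivAt_le_neg {f f' : ℝ → ℝ} {a b ε c : ℝ} (hab : a ≤ b)
    (hε : 0 < ε) (hf : ContinuousOn f (Icc a b)) (hf' : ∀ x ∈ Ioo a b, HasDerivAt f (f' x) x)
    (hf'ε : ∀ x ∈ Ioo a b, f' x ≤ -ε) (hc : c ∈ Ioo (f a - ε * (b - a)) (f a)) :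
    ∃! τ, τ ∈ Ioo a b ∧ f τ = c := by
  have hderiv : ∀ x ∈ interior (Icc a b), deriv f x ≤ -ε := by
    rw [interior_Icc]
    exact fun x hx ↦ (hf' x hx).deriv ▸ hf'ε x hx
  have hdiff : DifferentiableOn ℝ f (interior (Icc a b)) := by
    rw [interior_Icc]
    exact fun x hx ↦ (hf' x hx).differentiableAt.differentiableWithinAt
  have hanti : StrictAntiOn f (Icc a b) :=
    strictAntiOn_of_deriv_neg (convex_Icc a b) hf fun x hx ↦
      (hderiv x hx).trans_lt (neg_lt_zero.2 hε)
  have hfb : f b - f a ≤ -ε * (b - a) :=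
    (convex_Icc a b).image_sub_le_mul_sub_of_deriv_le hf hdiff hderiv a (left_mem_Icc.2 hab) b
      (right_mem_Icc.2 hab) hab
  obtain ⟨τ, hτ, hfτ⟩ := intermediate_value_Icc' hab hf ⟨by linarith [hc.1], hc.2.le⟩
  have hτ' : τ ∈ Ioo a b :=
    ⟨hτ.1.lt_of_ne (by rintro rfl; linarith [hc.2]), hτ.2.lt_of_ne (by rintro rfl; linarith [hc.1])⟩
  exact ⟨τ, ⟨hτ', hfτ⟩, fun σ hσ ↦ hanti.injOn (Ioo_subset_Icc_self hσ.1) hτ (hσ.2.trans hfτ.symm)⟩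

theorem stmt3_general (I : Set ℝ)
    (x₁ x₂ b K ε : ℝ) (hb : 0 < b) (hK : 0 < K) (hε : 0 < ε)
    (g : ℝ → ℝ → ℝ)
    (hgc : ContinuousOn (fun p : ℝ × ℝ => g p.1 p.2) (Metric.closedBall x₂ b ×ˢ I))
    (hgl : ∀ y ∈ I, ∀ u ∈ Metric.closedBall x₂ b, ∀ v ∈ Metric.closedBall x₂ b,
      |g u y - g v y| ≤ (K / b) * |u - v|)
    (hgb : ∀ u ∈ Metric.closedBall x₂ b, ∀ y ∈ I, ε ≤ g u y ∧ g u y ≤ K)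
    (hx : x₂ - x₁ ∈ Set.Ioo 0 ((b / K) * ε))
    (ψ : ℝ → ℝ) (hψ : C1on (-(b/K)) 0 ψ) (hψI : ∀ t ∈ Set.Icc (-(b/K)) 0, ψ t ∈ I) :
    ∃ y : ℝ → ℝ,
      (ContinuousOn y (Set.Icc 0 (b/K)) ∧
        (∀ s ∈ Set.Icc (0:ℝ) (b/K), y s ∈ Metric.closedBall x₂ b) ∧
        y 0 = x₂ ∧
        (∀ s ∈ Set.Icc (0:ℝ) (b/K),
          HasDerivWithinAt y (-(g (y s) (ψ (-s)))) (Set.Icc 0 (b/K)) s)) ∧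
      (∀ z : ℝ → ℝ,
        (ContinuousOn z (Set.Icc 0 (b/K)) ∧
          (∀ s ∈ Set.Icc (0:ℝ) (b/K), z s ∈ Metric.closedBall x₂ b) ∧
          z 0 = x₂ ∧
          (∀ s ∈ Set.Icc (0:ℝ) (b/K),
            HasDerivWithinAt z (-(g (z s) (ψ (-s)))) (Set.Icc 0 (b/K)) s)) →
        ∀ s ∈ Set.Icc (0:ℝ) (b/K), z s = y s) ∧
      (∃! τ : ℝ, τ ∈ Set.Ioo 0 (b/K) ∧ y τ = x₁) := by
  have hT : 0 < b / K := div_pos hb hK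
  have hneg : MapsTo Neg.neg (Icc 0 (b / K)) (Icc (-(b / K)) 0) :=
    fun t ht ↦ ⟨neg_le_neg ht.2, neg_nonpos.2 ht.1⟩
  have hψneg : MapsTo (fun t => ψ (-t)) (Icc 0 (b / K)) I := fun t ht ↦ hψI (-t) (hneg ht)
  have hpl : IsPicardLindelof (fun t x => -g x (ψ (-t))) (⟨0, left_mem_Icc.2 hT.le⟩ : Icc 0 (b / K))
      x₂ ⟨b, hb.le⟩ 0 ⟨K, hK.le⟩ ⟨K / b, (div_pos hK hb).le⟩ := by
    refine .of_forcing (g := fun u y => -g u y) hT.le hgc.neg (fun y hy ↦ ?_) (fun u hu y hy ↦ ?_)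
      (hψ.1.comp continuousOn_neg hneg) hψneg
      (mul_div_cancel₀ b hK.ne').le
    · refine LipschitzOnWith.of_dist_le_mul fun u hu v hv ↦ ?_
      rw [dist_neg_neg, Real.dist_eq, Real.dist_eq]
      exact hgl y hy u hu v hv
    · rw [norm_neg, Real.norm_of_nonneg (hε.le.trans (hgb u hu y hy).1)]
      exact (hgb u hu y hy).2
  obtain ⟨y, hy0, hy⟩ := hpl.exists_eq_forall_mem_Icc_hasDerivWithinAt_mem_closedBall
    (mem_closedBall_self le_rfl)
  have hyc : ContinuousOn y (Icc 0 (b / K)) := fun s hs ↦ (hy s hs).1.continuousWithinAt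
  refine ⟨y, ⟨hyc, fun s hs ↦ (hy s hs).2, hy0, fun s hs ↦ (hy s hs).1⟩, ?_, ?_⟩
  · rintro z ⟨-, hzB, hz0, hz⟩ s hs
    exact ODE_solution_unique_of_mem_Icc_hasDerivWithinAt
      (fun t ht ↦ hpl.lipschitzOnWith t (Ico_subset_Icc_self ht))
      (fun t ht ↦ ⟨hz t ht, hzB t ht⟩) hy (hz0.trans hy0.symm) hs
  · refine existsUnique_mem_Ioo_eq_of_hasDerivAt_le_neg hT.le hε hyc
      (fun s hs ↦ (hy s (Ioo_subset_Icc_self hs)).1.hasDerivAt (Icc_mem_nhds hs.1 hs.2))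
      (fun s hs ↦ neg_le_neg (hgb _ (hy s (Ioo_subset_Icc_self hs)).2 _
        (hψneg (Ioo_subset_Icc_self hs))).1) ?_
    rw [hy0, sub_zero]
    exact ⟨by linarith [hx.2], by linarith [hx.1]⟩

/-- Picard–Lindelöf theorem for y' = -g(y, ψ(-·)), y(0) = x₂, with
values in cl(B(x₂,b)), plus unique hitting time τ ∈ (0, b/K) with y(τ) = x₁. -/
theorem stmt3 (I : Set ℝ) (hIo : IsOpen I) (hIne : I.Nonempty)
    (x₁ x₂ b K ε : ℝ) (hx₁ : 0 < x₁) (hx₂ : 0 < x₂) (hb : 0 < b) (hK : 0 < K) (hε : 0 < ε)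
    (g : ℝ → ℝ → ℝ)
    (hgc : ContinuousOn (fun p : ℝ × ℝ => g p.1 p.2) (Metric.closedBall x₂ b ×ˢ I))
    (hgl : ∀ y ∈ I, ∀ u ∈ Metric.closedBall x₂ b, ∀ v ∈ Metric.closedBall x₂ b,
      |g u y - g v y| ≤ (K / b) * |u - v|)
    (hgb : ∀ u ∈ Metric.closedBall x₂ b, ∀ y ∈ I, ε ≤ g u y ∧ g u y ≤ K)
    (hx : x₂ - x₁ ∈ Set.Ioo 0 ((b / K) * ε))
    (ψ : ℝ → ℝ) (hψ : C1on (-(b/K)) 0 ψ) (hψI : ∀ t ∈ Set.Icc (-(b/K)) 0, ψ t ∈ I) :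
    ∃ y : ℝ → ℝ,
      (ContinuousOn y (Set.Icc 0 (b/K)) ∧
        (∀ s ∈ Set.Icc (0:ℝ) (b/K), y s ∈ Metric.closedBall x₂ b) ∧
        y 0 = x₂ ∧
        (∀ s ∈ Set.Icc (0:ℝ) (b/K),
          HasDerivWithinAt y (-(g (y s) (ψ (-s)))) (Set.Icc 0 (b/K)) s)) ∧
      (∀ z : ℝ → ℝ,
        (ContinuousOn z (Set.Icc 0 (b/K)) ∧
          (∀ s ∈ Set.Icc (0:ℝ) (b/K), z s ∈ Metric.closedBall x₂ b) ∧
          z 0 = x₂ ∧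
          (∀ s ∈ Set.Icc (0:ℝ) (b/K),
            HasDerivWithinAt z (-(g (z s) (ψ (-s)))) (Set.Icc 0 (b/K)) s)) →
        ∀ s ∈ Set.Icc (0:ℝ) (b/K), z s = y s) ∧
      (∃! τ : ℝ, τ ∈ Set.Ioo 0 (b/K) ∧ y τ = x₁) :=
  stmt3_general I x₁ x₂ b K ε hb hK hε g hgc hgl hgb hx ψ hψ hψI
end

section
/- Let J, I ⊆ ℝ be open, h > 0, and k : J × I → ℝ continuously differentiable. Fix ψ ∈ C¹([-h,0],I) and z̄ ∈ C¹([0,h],J). Then sup_{s∈[0,h]} | k(z(s), ψ(−s)) − k(z̄(s), ψ(−s)) − ∂₁k(z̄(s), ψ(−s)) (z(s) − z̄(s)) | = o(‖z − z̄‖¹) as ‖z − z̄‖¹ → 0 over z ∈ C¹([0,h],J). -/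
open Set

/-- Partial derivative in the first argument. -/
noncomputable def p1 (k : ℝ → ℝ → ℝ) (x y : ℝ) : ℝ := deriv (fun x' => k x' y) x

/-- Partial derivative in the second argument. -/
noncomputable def p2 (k : ℝ → ℝ → ℝ) (x y : ℝ) : ℝ := deriv (fun y' => k x y') y

/-!
The remainder `k(z, ψ) - k(z̄, ψ) - ∂₁k(z̄, ψ)(z - z̄)` is controlled pointwise by the mean value
inequality through the oscillation of `Dk` on a segment of length `|z(s) - z̄(s)|`. The points
`(z̄(s), ψ(-s))` form a compact subset of the open set `J × I`, so a closed thickening of it still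
lies in `J × I`, and `Dk` is uniformly continuous there; this makes the estimate uniform in `s`.
Finally `|z(s) - z̄(s)|` is bounded by the C¹-norm of `z - z̄`.
-/

section SupNorm

variable {X : Type*} [NormedAddCommGroup X] {a b : ℝ} {f : ℝ → X}

lemma supN_nonneg : 0 ≤ supN a b f :=
  Real.iSup_nonneg fun _ => norm_nonneg _

lemma norm_le_supN (hf : ContinuousOn f (Icc a b)) {t : ℝ} (ht : t ∈ Icc a b) :
    ‖f t‖ ≤ supN a b f :=
  le_ciSup (isCompact_range (continuous_norm.comp hf.domRestrict)).bddAbove ⟨t, ht⟩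

variable [NormedSpace ℝ X]

lemma nC1_nonneg : 0 ≤ nC1 a b f :=
  add_nonneg supN_nonneg supN_nonneg

lemma norm_le_nC1 (hf : ContinuousOn f (Icc a b)) {t : ℝ} (ht : t ∈ Icc a b) :
    ‖f t‖ ≤ nC1 a b f :=
  (norm_le_supN hf ht).trans (le_add_of_nonneg_right supN_nonneg)

end SupNorm

theorem IsCompact.exists_forall_norm_sub_sub_fderiv_le {E G : Type*}
    [NormedAddCommGroup E] [NormedSpace ℝ E] [ProperSpace E]
    [NormedAddCommGroup G] [NormedSpace ℝ G] {f : E → G} {U K : Set E}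
    (hK : IsCompact K) (hU : IsOpen U) (hf : ContDiffOn ℝ 1 f U) (hKU : K ⊆ U)
    {ε : ℝ} (hε : 0 < ε) :
    ∃ δ > 0, ∀ x ∈ K, ∀ v : E, ‖v‖ ≤ δ → ‖f (x + v) - f x - fderiv ℝ f x v‖ ≤ ε * ‖v‖ := by
  obtain ⟨r, hr, hrU⟩ := hK.exists_cthickening_subset_open hU hKU
  have hunif : UniformContinuousOn (fderiv ℝ f) (Metric.cthickening r K) :=
    hK.cthickening.uniformContinuousOn_of_continuous
      ((hf.continuousOn_fderiv_of_isOpen hU le_rfl).mono hrU)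
  obtain ⟨δ₁, hδ₁, hδ₁ε⟩ := Metric.uniformContinuousOn_iff_le.1 hunif ε hε
  refine ⟨min δ₁ r, lt_min hδ₁ hr, fun x hx v hv => ?_⟩
  have hball : Metric.closedBall x (min δ₁ r) ⊆ Metric.cthickening r K :=
    (Metric.closedBall_subset_cthickening hx _).trans
      (Metric.cthickening_mono (min_le_right _ _) K)
  have hxK : x ∈ Metric.cthickening r K := Metric.self_subset_cthickening K hx
  have hx_mem : x ∈ Metric.closedBall x (min δ₁ r) := Metric.mem_closedBall_self (by positivity)
  have hxv_mem : x + v ∈ Metric.closedBall x (min δ₁ r) := by simpa using hv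
  simpa using (convex_closedBall x (min δ₁ r)).norm_image_sub_le_of_norm_fderiv_le'
    (fun y hy => (hf.contDiffAt (hU.mem_nhds (hrU (hball hy)))).differentiableAt one_ne_zero)
    (fun y hy => by
      simpa [dist_eq_norm] using hδ₁ε y (hball hy) x hxK
        ((Metric.mem_closedBall.1 hy).trans (min_le_left _ _)))
    hx_mem hxv_mem

lemma fderiv_uncurry_apply_fst {k : ℝ → ℝ → ℝ} {x y : ℝ}
    (hk : DifferentiableAt ℝ (fun p : ℝ × ℝ => k p.1 p.2) (x, y)) (d : ℝ) :
    fderiv ℝ (fun p : ℝ × ℝ => k p.1 p.2) (x, y) (d, 0) = p1 k x y * d := by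
  have hpartial : HasDerivAt (fun x' => k x' y)
      (fderiv ℝ (fun p : ℝ × ℝ => k p.1 p.2) (x, y) (1, 0)) x :=
    (hk.hasFDerivAt.comp_hasDerivAt x ((hasDerivAt_id x).prodMk (hasDerivAt_const x y)) :)
  have hd : ((d, 0) : ℝ × ℝ) = d • ((1, 0) : ℝ × ℝ) := by simp
  rw [p1, hpartial.deriv, hd, map_smul, smul_eq_mul, mul_comm]

theorem stmt7_general (J I : Set ℝ) (hJ : IsOpen J) (hI : IsOpen I) (h : ℝ)
    (k : ℝ → ℝ → ℝ) (hk : ContDiffOn ℝ 1 (fun p : ℝ × ℝ => k p.1 p.2) (J ×ˢ I))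
    (ψ : ℝ → ℝ) (hψ : C1on (-h) 0 ψ) (hψI : ∀ t ∈ Set.Icc (-h) 0, ψ t ∈ I)
    (zb : ℝ → ℝ) (hzb : C1on 0 h zb) (hzbJ : ∀ s ∈ Set.Icc (0:ℝ) h, zb s ∈ J) :
    ∀ ε > 0, ∃ δ > 0, ∀ z : ℝ → ℝ, C1on 0 h z → (∀ s ∈ Set.Icc (0:ℝ) h, z s ∈ J) →
      nC1 0 h (z - zb) ≤ δ →
      (⨆ s : Set.Icc (0:ℝ) h, |k (z s.1) (ψ (-s.1)) - k (zb s.1) (ψ (-s.1)) -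
        p1 k (zb s.1) (ψ (-s.1)) * (z s.1 - zb s.1)|) ≤ ε * nC1 0 h (z - zb) := by
  intro ε hε
  have hneg : MapsTo (fun s : ℝ => -s) (Icc 0 h) (Icc (-h) 0) := fun s hs =>
    ⟨neg_le_neg hs.2, neg_nonpos.2 hs.1⟩
  set γ : ℝ → ℝ × ℝ := fun s => (zb s, ψ (-s))
  have hγ : ContinuousOn γ (Icc 0 h) := hzb.1.prodMk (hψ.1.comp continuous_neg.continuousOn hneg)
  have hγJI : MapsTo γ (Icc 0 h) (J ×ˢ I) := fun s hs => ⟨hzbJ s hs, hψI _ (hneg hs)⟩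
  obtain ⟨δ, hδ, htaylor⟩ :=
    (isCompact_Icc.image_of_continuousOn hγ).exists_forall_norm_sub_sub_fderiv_le
      (hJ.prod hI) hk hγJI.image_subset hε
  refine ⟨δ, hδ, fun z hz _ hzδ => Real.iSup_le (fun ⟨s, hs⟩ => ?_) (mul_nonneg hε.le nC1_nonneg)⟩
  have hd : |z s - zb s| ≤ nC1 0 h (z - zb) := norm_le_nC1 (hz.1.sub hzb.1) hs
  have hkdiff : DifferentiableAt ℝ (fun p : ℝ × ℝ => k p.1 p.2) (γ s) :=
    (hk.contDiffAt ((hJ.prod hI).mem_nhds (hγJI hs))).differentiableAt one_ne_zero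
  have hrem := htaylor (γ s) (mem_image_of_mem γ hs) (z s - zb s, 0)
    (by simpa [Prod.norm_def] using hd.trans hzδ)
  rw [fderiv_uncurry_apply_fst hkdiff] at hrem
  simp only [γ, Prod.mk_add_mk, add_sub_cancel, add_zero, Prod.norm_def, norm_zero,
    Real.norm_eq_abs, abs_nonneg, max_eq_left] at hrem
  exact hrem.trans (mul_le_mul_of_nonneg_left hd hε.le)

/-- for C¹ k and fixed ψ, z̄, the first-order Taylor remainder of
z ↦ k(z(·),ψ(-·)) is o(‖z - z̄‖¹) uniformly on [0,h]. -/
theorem stmt7 (J I : Set ℝ) (hJ : IsOpen J) (hI : IsOpen I) (h : ℝ) (hh : 0 < h)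
    (k : ℝ → ℝ → ℝ) (hk : ContDiffOn ℝ 1 (fun p : ℝ × ℝ => k p.1 p.2) (J ×ˢ I))
    (ψ : ℝ → ℝ) (hψ : C1on (-h) 0 ψ) (hψI : ∀ t ∈ Set.Icc (-h) 0, ψ t ∈ I)
    (zb : ℝ → ℝ) (hzb : C1on 0 h zb) (hzbJ : ∀ s ∈ Set.Icc (0:ℝ) h, zb s ∈ J) :
    ∀ ε > 0, ∃ δ > 0, ∀ z : ℝ → ℝ, C1on 0 h z → (∀ s ∈ Set.Icc (0:ℝ) h, z s ∈ J) →
      nC1 0 h (z - zb) ≤ δ →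
      (⨆ s : Set.Icc (0:ℝ) h, |k (z s.1) (ψ (-s.1)) - k (zb s.1) (ψ (-s.1)) -
        p1 k (zb s.1) (ψ (-s.1)) * (z s.1 - zb s.1)|) ≤ ε * nC1 0 h (z - zb) :=
  stmt7_general J I hJ hI h k hk ψ hψ hψI zb hzb hzbJ
end
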